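/- Suppose u₁, u₂ : ℕ → ℝ satisfy, along a sequence Lₙ → ∞, the bounds ‖u₁‖_{Lₙ}² ≤ C·Lₙ·(log Lₙ)^{1+δ} and ‖u₂‖_{Lₙ}² ≥ c·e^{γLₙ} for constants C, c, γ, δ > 0, where ‖u‖_L² = Σ_{k=1}^L |u(k)|². Let ρ(t) = 1/(log(1/t)·(log log(1/t))^{1+δ'}) for some δ' > δ. Then liminf_{n→∞} ρ(‖u₁‖_{Lₙ}^{-1}‖u₂‖_{Lₙ}^{-1})·‖u₁‖_{Lₙ}² = 0. -/

import Mathlib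

/-!
Put `T = 1/t = ‖u₁‖ ‖u₂‖`. Unless `u₁` vanishes identically (when every term is `0`), `‖u₁‖²_L`
is nondecreasing in `L` and hence eventually bounded below by a positive constant, so the
exponential growth of `‖u₂‖` gives `log T ≥ γLₙ/4` and then `log log T ≥ (log Lₙ)/2` for large `n`.
Therefore `ρ(t)‖u₁‖² ≤ C Lₙ (log Lₙ)^{1+δ} / ((γLₙ/4)((log Lₙ)/2)^{1+δ'}) = O((log Lₙ)^{δ-δ'}) → 0`.
-/

open Filter Real Topology

noncomputable def rho (δ' t : ℝ) : ℝ :=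
  1 / (Real.log (1 / t) * Real.log (Real.log (1 / t)) ^ ((1 : ℝ) + δ'))

def sqNorm (u : ℕ → ℝ) (L : ℕ) : ℝ := ∑ k ∈ Finset.Icc 1 L, u k ^ 2

lemma sqNorm_nonneg (u : ℕ → ℝ) (L : ℕ) : 0 ≤ sqNorm u L :=
  Finset.sum_nonneg fun _ _ => sq_nonneg _

lemma sqNorm_mono (u : ℕ → ℝ) : Monotone (sqNorm u) := fun _ _ h =>
  Finset.sum_le_sum_of_subset_of_nonneg (Finset.Icc_subset_Icc_right h)
    fun _ _ _ => sq_nonneg _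

lemma sqNorm_eq_zero_or_eventually_ge (u : ℕ → ℝ) :
    (∀ L, sqNorm u L = 0) ∨ ∃ a > 0, ∀ᶠ L in atTop, a ≤ sqNorm u L := by
  refine or_iff_not_imp_left.2 fun h => ?_
  obtain ⟨L₀, hL₀⟩ := not_forall.1 h
  exact ⟨_, (sqNorm_nonneg u L₀).lt_of_ne' hL₀,
    eventually_atTop.2 ⟨L₀, fun _ => (sqNorm_mono u ·)⟩⟩

lemma rho_inv_nonneg {δ' T : ℝ} (hT : 0 ≤ Real.log T) (hlogT : 0 ≤ Real.log (Real.log T)) :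
    0 ≤ rho δ' T⁻¹ := by
  simp only [rho, one_div, inv_inv]
  positivity

lemma rho_inv_mul_le {δ' T s N A B : ℝ} (hδ' : 0 ≤ 1 + δ') (hs : 0 ≤ s) (hsN : s ≤ N)
    (hA : 0 < A) (hAT : A ≤ Real.log T) (hB : 0 < B) (hBT : B ≤ Real.log (Real.log T)) :
    rho δ' T⁻¹ * s ≤ N / (A * B ^ (1 + δ')) := by
  have hden : A * B ^ (1 + δ') ≤ Real.log T * Real.log (Real.log T) ^ (1 + δ') :=
    mul_le_mul hAT (rpow_le_rpow hB.le hBT hδ') (by positivity) (hA.le.trans hAT)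
  simp only [rho, one_div, inv_inv]
  rw [inv_mul_eq_div]
  exact div_le_div₀ (hs.trans hsN) hsN (by positivity) hden

section Eventually

variable {ι : Type*} {l : Filter ι}

lemma eventually_half_log_le_log {g ℓ : ι → ℝ} {κ : ℝ} (hℓ : Tendsto ℓ l atTop) (hκ : 0 < κ)
    (hg : ∀ᶠ i in l, κ * ℓ i ≤ g i) : ∀ᶠ i in l, Real.log (ℓ i) / 2 ≤ Real.log (g i) := by
  filter_upwards [hg, hℓ.eventually_gt_atTop 0,
    (tendsto_log_atTop.comp hℓ).eventually_ge_atTop (-2 * Real.log κ)] with i hgi hℓi hlogi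
  calc Real.log (ℓ i) / 2 ≤ Real.log κ + Real.log (ℓ i) := by
        simp only [Function.comp_apply] at hlogi; linarith
    _ = Real.log (κ * ℓ i) := (Real.log_mul hκ.ne' hℓi.ne').symm
    _ ≤ Real.log (g i) := Real.log_le_log (by positivity) hgi

lemma eventually_mul_le_log_sqrt_mul_sqrt {s₁ s₂ ℓ : ι → ℝ} {a c γ : ℝ}
    (hℓ : Tendsto ℓ l atTop) (ha : 0 < a) (hc : 0 < c) (hγ : 0 < γ)
    (hs₁ : ∀ᶠ i in l, a ≤ s₁ i) (hs₂ : ∀ᶠ i in l, c * exp (γ * ℓ i) ≤ s₂ i) :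
    ∀ᶠ i in l, γ / 4 * ℓ i ≤ Real.log (√(s₁ i) * √(s₂ i)) := by
  filter_upwards [hs₁, hs₂, (hℓ.const_mul_atTop (by positivity : 0 < γ / 4)).eventually_ge_atTop
    (-(Real.log a + Real.log c) / 2)] with i h₁ h₂ hℓi
  have hs₁i : 0 < s₁ i := ha.trans_le h₁
  have hs₂i : 0 < s₂ i := (by positivity : 0 < c * exp (γ * ℓ i)).trans_le h₂
  have hlog₁ : Real.log a ≤ Real.log (s₁ i) := Real.log_le_log ha h₁
  have hlog₂ : Real.log c + γ * ℓ i ≤ Real.log (s₂ i) := by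
    simpa only [Real.log_mul hc.ne' (exp_ne_zero _), Real.log_exp]
      using Real.log_le_log (by positivity) h₂
  rw [Real.log_mul (sqrt_pos.2 hs₁i).ne' (sqrt_pos.2 hs₂i).ne', Real.log_sqrt hs₁i.le,
    Real.log_sqrt hs₂i.le]
  linarith

lemma tendsto_mul_log_rpow_div_mul_log_rpow {ℓ : ι → ℝ} {C γ δ δ' : ℝ}
    (hℓ : Tendsto ℓ l atTop) (hγ : 0 < γ) (hδδ' : δ < δ') :
    Tendsto (fun i => C * ℓ i * Real.log (ℓ i) ^ (1 + δ) /
      (γ / 4 * ℓ i * (Real.log (ℓ i) / 2) ^ (1 + δ'))) l (𝓝 0) := by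
  have hlogℓ := tendsto_log_atTop.comp hℓ
  have hlim : Tendsto (fun i => 4 * 2 ^ (1 + δ') * C / γ * Real.log (ℓ i) ^ (δ - δ')) l (𝓝 0) := by
    have := ((tendsto_rpow_neg_atTop (sub_pos.2 hδδ')).comp hlogℓ).const_mul
      (4 * 2 ^ (1 + δ') * C / γ)
    simpa only [Function.comp_def, mul_zero, neg_sub] using this
  refine hlim.congr' ?_
  filter_upwards [hℓ.eventually_gt_atTop 0, hlogℓ.eventually_gt_atTop 0] with i hℓi hlogi
  simp only [Function.comp_apply] at hlogi
  have hsplit :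
      Real.log (ℓ i) ^ (1 + δ) = Real.log (ℓ i) ^ (δ - δ') * Real.log (ℓ i) ^ (1 + δ') := by
    rw [← rpow_add hlogi]; ring_nf
  rw [div_rpow hlogi.le zero_le_two, hsplit]
  field_simp

theorem tendsto_rho_mul {s₁ s₂ ℓ : ι → ℝ} {a C c γ δ δ' : ℝ} (hℓ : Tendsto ℓ l atTop)
    (ha : 0 < a) (hc : 0 < c) (hγ : 0 < γ) (hδ' : 0 ≤ 1 + δ') (hδδ' : δ < δ')
    (hs₁ : ∀ᶠ i in l, a ≤ s₁ i) (h₁ : ∀ᶠ i in l, s₁ i ≤ C * ℓ i * Real.log (ℓ i) ^ (1 + δ))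
    (h₂ : ∀ᶠ i in l, c * exp (γ * ℓ i) ≤ s₂ i) :
    Tendsto (fun i => rho δ' ((√(s₁ i))⁻¹ * (√(s₂ i))⁻¹) * s₁ i) l (𝓝 0) := by
  have hA := eventually_mul_le_log_sqrt_mul_sqrt hℓ ha hc hγ hs₁ h₂
  have hB := eventually_half_log_le_log hℓ (by positivity) hA
  have hAB : ∀ᶠ i in l, 0 < γ / 4 * ℓ i ∧ 0 < Real.log (ℓ i) / 2 := by
    filter_upwards [hℓ.eventually_gt_atTop 0,
      (tendsto_log_atTop.comp hℓ).eventually_gt_atTop 0] with i hℓi hlogi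
    exact ⟨by positivity, half_pos hlogi⟩
  refine tendsto_of_tendsto_of_tendsto_of_le_of_le' tendsto_const_nhds
    (tendsto_mul_log_rpow_div_mul_log_rpow (C := C) hℓ hγ hδδ') ?_ ?_
  all_goals
    filter_upwards [hs₁, h₁, hA, hB, hAB] with i hs₁i h₁i hAi hBi ⟨hA₀, hB₀⟩
    rw [← mul_inv]
  · exact mul_nonneg (rho_inv_nonneg (hA₀.le.trans hAi) (hB₀.le.trans hBi)) (ha.le.trans hs₁i)
  · exact rho_inv_mul_le hδ' (ha.le.trans hs₁i) h₁i hA₀ hAi hB₀ hBi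

end Eventually

theorem stmt_19_general (u1 u2 : ℕ → ℝ) (L : ℕ → ℕ) (hL : Tendsto L atTop atTop)
    (C c γ δ δ' : ℝ) (hc : 0 < c) (hγ : 0 < γ) (hδ : 0 < δ)
    (hδ' : δ < δ')
    (h1 : ∀ n, (∑ k ∈ Finset.Icc 1 (L n), u1 k ^ 2)
      ≤ C * (L n : ℝ) * Real.log (L n) ^ ((1 : ℝ) + δ))
    (h2 : ∀ n, c * Real.exp (γ * (L n : ℝ))
      ≤ ∑ k ∈ Finset.Icc 1 (L n), u2 k ^ 2) :
    Filter.liminf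
      (fun n =>
        (1 / (Real.log (1 / ((Real.sqrt (∑ k ∈ Finset.Icc 1 (L n), u1 k ^ 2))⁻¹ *
                (Real.sqrt (∑ k ∈ Finset.Icc 1 (L n), u2 k ^ 2))⁻¹))
          * Real.log (Real.log (1 /
              ((Real.sqrt (∑ k ∈ Finset.Icc 1 (L n), u1 k ^ 2))⁻¹ *
                (Real.sqrt (∑ k ∈ Finset.Icc 1 (L n), u2 k ^ 2))⁻¹)))
              ^ ((1 : ℝ) + δ')))
          * (∑ k ∈ Finset.Icc 1 (L n), u1 k ^ 2))
      atTop = 0 := by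
  change liminf (fun n => rho δ' ((√(sqNorm u1 (L n)))⁻¹ * (√(sqNorm u2 (L n)))⁻¹) *
    sqNorm u1 (L n)) atTop = 0
  rcases sqNorm_eq_zero_or_eventually_ge u1 with hzero | ⟨a, ha, hge⟩
  · simp only [hzero, mul_zero, liminf_const]
  · exact (tendsto_rho_mul (tendsto_natCast_atTop_atTop.comp hL) ha hc hγ (by linarith) hδ'
      (hL.eventually hge) (Eventually.of_forall h1) (Eventually.of_forall h2)).liminf_eq

/-- If along a sequence `Lₙ → ∞` one has `‖u₁‖²_{Lₙ} ≤ C Lₙ (log Lₙ)^{1+δ}` and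
`‖u₂‖²_{Lₙ} ≥ c e^{γLₙ}`, then with
`ρ(t) = 1/(log(1/t)·(log log(1/t))^{1+δ'})` for `δ' > δ`:
`liminf ρ(‖u₁‖⁻¹_{Lₙ}‖u₂‖⁻¹_{Lₙ})·‖u₁‖²_{Lₙ} = 0`. -/
theorem stmt_19 (u1 u2 : ℕ → ℝ) (L : ℕ → ℕ) (hL : Tendsto L atTop atTop)
    (C c γ δ δ' : ℝ) (hC : 0 < C) (hc : 0 < c) (hγ : 0 < γ) (hδ : 0 < δ)
    (hδ' : δ < δ')
    (h1 : ∀ n, (∑ k ∈ Finset.Icc 1 (L n), u1 k ^ 2)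
      ≤ C * (L n : ℝ) * Real.log (L n) ^ ((1 : ℝ) + δ))
    (h2 : ∀ n, c * Real.exp (γ * (L n : ℝ))
      ≤ ∑ k ∈ Finset.Icc 1 (L n), u2 k ^ 2) :
    Filter.liminf
      (fun n =>
        (1 / (Real.log (1 / ((Real.sqrt (∑ k ∈ Finset.Icc 1 (L n), u1 k ^ 2))⁻¹ *
                (Real.sqrt (∑ k ∈ Finset.Icc 1 (L n), u2 k ^ 2))⁻¹))
          * Real.log (Real.log (1 /
              ((Real.sqrt (∑ k ∈ Finset.Icc 1 (L n), u1 k ^ 2))⁻¹ *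
                (Real.sqrt (∑ k ∈ Finset.Icc 1 (L n), u2 k ^ 2))⁻¹)))
              ^ ((1 : ℝ) + δ')))
          * (∑ k ∈ Finset.Icc 1 (L n), u1 k ^ 2))
      atTop = 0 :=
  stmt_19_general u1 u2 L hL C c γ δ δ' hc hγ hδ hδ' h1 h2
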